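/- Let p be a generalized local minimum point of the weight function w of a good semigroup S, and let γ = {x^k}_{k=0}^t be any increasing lattice path from 0 to p. Then w(p) = −#{k : 0 ≤ k < t, w(x^{k+1}) = w(x^k) − 1 and w(p − x^k) = w(p − x^{k+1}) − 1}. In particular this count is independent of the chosen path, and w(p) ≤ 0. -/

import Mathlib

open Finset

/-- Lattice points (we work in `ℤ^r`; nonnegativity is imposed via hypotheses). -/
abbrev Pt (r : ℕ) := Fin r → ℤ

/-- The `i`-th standard basis vector. -/
def E {r : ℕ} (i : Fin r) : Pt r := Pi.single i 1

/-- `e_K = ∑_{i ∈ K} e_i`. -/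
def eK {r : ℕ} (K : Finset (Fin r)) : Pt r := ∑ i ∈ K, E i

/-- `Δ̄ᵢ(ℓ) = {s ∈ S : sᵢ = ℓᵢ, sⱼ ≥ ℓⱼ ∀ j ≠ i}`. -/
def DeltaBarI {r : ℕ} (S : Set (Pt r)) (ℓ : Pt r) (i : Fin r) : Set (Pt r) :=
  {s | s ∈ S ∧ s i = ℓ i ∧ ∀ j, j ≠ i → ℓ j ≤ s j}

/-- `Δᵢ(ℓ) = {s ∈ S : sᵢ = ℓᵢ, sⱼ > ℓⱼ ∀ j ≠ i}`. -/
def DeltaI {r : ℕ} (S : Set (Pt r)) (ℓ : Pt r) (i : Fin r) : Set (Pt r) :=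
  {s | s ∈ S ∧ s i = ℓ i ∧ ∀ j, j ≠ i → ℓ j < s j}

/-- `Δ(ℓ) = ∪ᵢ Δᵢ(ℓ)`. -/
def Delta {r : ℕ} (S : Set (Pt r)) (ℓ : Pt r) : Set (Pt r) := ⋃ i, DeltaI S ℓ i

/-- A good (local) semigroup `S ⊂ ℤ_{≥0}^r` with conductor `c`. -/
structure GoodSemigroup (r : ℕ) where
  S : Set (Pt r)
  c : Pt r
  nonneg : ∀ s ∈ S, (0 : Pt r) ≤ s
  zero_mem : (0 : Pt r) ∈ S
  add_mem : ∀ s ∈ S, ∀ t ∈ S, s + t ∈ S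
  coord_zero : ∀ s ∈ S, ∀ i, s i = 0 → s = 0
  min_mem : ∀ s ∈ S, ∀ t ∈ S, s ⊓ t ∈ S
  prop3 : ∀ s ∈ S, ∀ t ∈ S, ∀ i, s i = t i →
    ∃ u ∈ S, s ⊓ t ≤ u ∧ s i < u i ∧ ∀ j, j ≠ i → s j ≠ t j → u j = (s ⊓ t) j
  conductor_nonneg : (0 : Pt r) ≤ c
  conductor_mem : ∀ ℓ : Pt r, c ≤ ℓ → ℓ ∈ S
  conductor_min : ∀ c' : Pt r, 0 ≤ c' → (∀ ℓ, c' ≤ ℓ → ℓ ∈ S) → c ≤ c'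

/-- `h` is the (combinatorial) Hilbert function of the good semigroup `G`. -/
def IsHilbert {r : ℕ} (G : GoodSemigroup r) (h : Pt r → ℤ) : Prop :=
  h 0 = 0 ∧ ∀ ℓ : Pt r, 0 ≤ ℓ → ∀ i : Fin r,
    (h (ℓ + E i) = h ℓ + 1 ↔ (DeltaBarI G.S ℓ i).Nonempty) ∧
    (h (ℓ + E i) = h ℓ ↔ ¬ (DeltaBarI G.S ℓ i).Nonempty)

/-- `w` is the weight function of the good semigroup `G` (i.e. `w(ℓ) = 2h(ℓ) − |ℓ|`),
characterized by `w(0) = 0` and the step property. -/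
def IsWeight {r : ℕ} (G : GoodSemigroup r) (w : Pt r → ℤ) : Prop :=
  w 0 = 0 ∧ ∀ ℓ : Pt r, 0 ≤ ℓ → ∀ i : Fin r,
    (w (ℓ + E i) = w ℓ + 1 ↔ (DeltaBarI G.S ℓ i).Nonempty) ∧
    (w (ℓ + E i) = w ℓ - 1 ↔ ¬ (DeltaBarI G.S ℓ i).Nonempty)

/-- Generalized local minimum point of the weight function. -/
def GLM {r : ℕ} (w : Pt r → ℤ) (p : Pt r) : Prop :=
  0 ≤ p ∧ ∀ i : Fin r, 1 ≤ p i → w p < w (p - E i)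

/-- Local minimum point of the weight function. -/
def LocMin {r : ℕ} (w : Pt r → ℤ) (p : Pt r) : Prop :=
  GLM w p ∧ ∀ i : Fin r, w p < w (p + E i)

/-!
Walk along the path and simultaneously along its dual `p - x^k`, traversed backwards. Each
weight step is `±1`, and at a generalized local minimum an increase `w(ℓ + eᵢ) = w(ℓ) + 1`
forces `w(p - ℓ) = w(p - ℓ - eᵢ) - 1`: otherwise an element of `Δ̄ᵢ(ℓ)` plus one of
`Δ̄ᵢ(p - ℓ - eᵢ)` would lie in `Δ̄ᵢ(p - eᵢ)`, making `w(p) = w(p - eᵢ) + 1`. Hence each step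
contributes `0` or `-2` to the sum of the two increments, `-2` exactly when both steps go down,
and both walks telescope to `w(p) - w(0) = w(p)`.
-/

variable {r : ℕ}

lemma E_nonneg (i : Fin r) : (0 : Pt r) ≤ E i :=
  Pi.single_nonneg.mpr zero_le_one

lemma GoodSemigroup.add_mem_deltaBarI (G : GoodSemigroup r) {a b s u : Pt r} {i : Fin r}
    (hs : s ∈ DeltaBarI G.S a i) (hu : u ∈ DeltaBarI G.S b i) :
    s + u ∈ DeltaBarI G.S (a + b) i := by
  obtain ⟨hsS, hsi, hsj⟩ := hs
  obtain ⟨huS, hui, huj⟩ := hu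
  refine ⟨G.add_mem s hsS u huS, by simp [hsi, hui], fun j hj => ?_⟩
  simp only [Pi.add_apply]
  exact add_le_add (hsj j hj) (huj j hj)

lemma path_le_of_le {x : ℕ → Pt r} {t : ℕ} (hstep : ∀ k < t, ∃ i : Fin r, x (k+1) = x k + E i)
    {k m : ℕ} (hkm : k ≤ m) (hmt : m ≤ t) : x k ≤ x m := by
  induction m, hkm using Nat.le_induction with
  | base => exact le_rfl
  | succ m _ ih =>
    obtain ⟨i, hi⟩ := hstep m (by omega)
    exact (ih (by omega)).trans (hi ▸ le_add_of_nonneg_right (E_nonneg i))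

namespace IsWeight

variable {G : GoodSemigroup r} {w : Pt r → ℤ}

lemma step_eq_add_one_or_sub_one (hw : IsWeight G w) {ℓ : Pt r} (hℓ : 0 ≤ ℓ) (i : Fin r) :
    w (ℓ + E i) = w ℓ + 1 ∨ w (ℓ + E i) = w ℓ - 1 := by
  by_cases h : (DeltaBarI G.S ℓ i).Nonempty
  · exact Or.inl ((hw.2 ℓ hℓ i).1.mpr h)
  · exact Or.inr ((hw.2 ℓ hℓ i).2.mpr h)

lemma dual_step_down (hw : IsWeight G w) {p ℓ : Pt r} (hp : GLM w p) {i : Fin r}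
    (hℓ : 0 ≤ ℓ) (hle : ℓ + E i ≤ p) (hup : w (ℓ + E i) = w ℓ + 1) :
    w (p - ℓ) = w (p - (ℓ + E i)) - 1 := by
  have hdual_nonneg : 0 ≤ p - (ℓ + E i) := sub_nonneg.mpr hle
  have hpi : 1 ≤ p i := by simpa [E] using add_le_add (hℓ i) le_rfl |>.trans (hle i)
  have hempty : ¬ (DeltaBarI G.S (p - (ℓ + E i)) i).Nonempty := by
    rintro ⟨u, hu⟩
    obtain ⟨s, hs⟩ := (hw.2 ℓ hℓ i).1.mp hup
    have hmem := G.add_mem_deltaBarI hs hu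
    rw [show ℓ + (p - (ℓ + E i)) = p - E i by abel] at hmem
    have hup' := (hw.2 (p - E i) (hℓ.trans (le_sub_right_of_add_le hle)) i).1.mpr ⟨_, hmem⟩
    rw [sub_add_cancel] at hup'
    linarith [hp.2 i hpi]
  have hdown := (hw.2 _ hdual_nonneg i).2.mpr hempty
  rw [show p - (ℓ + E i) + E i = p - ℓ by abel] at hdown
  omega

lemma step_add_dual_step (hw : IsWeight G w) {p ℓ : Pt r} (hp : GLM w p) {i : Fin r}
    (hℓ : 0 ≤ ℓ) (hle : ℓ + E i ≤ p) :
    (w (ℓ + E i) - w ℓ) + (w (p - ℓ) - w (p - (ℓ + E i))) =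
      if w (ℓ + E i) = w ℓ - 1 ∧ w (p - ℓ) = w (p - (ℓ + E i)) - 1 then -2 else 0 := by
  have hdual : p - ℓ = p - (ℓ + E i) + E i := by abel
  rcases hw.step_eq_add_one_or_sub_one hℓ i with hup | hdown
  · have := hw.dual_step_down hp hℓ hle hup
    rw [if_neg (by omega)]
    omega
  · rcases hdual ▸ hw.step_eq_add_one_or_sub_one (sub_nonneg.mpr hle) i with hdup | hddown
    · rw [if_neg (by omega)]
      omega
    · rw [if_pos (by omega)]
      omega

end IsWeight

open Classical in
theorem stmt8 {r : ℕ} (G : GoodSemigroup r) (w : Pt r → ℤ) (hw : IsWeight G w)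
    (p : Pt r) (hp : GLM w p)
    (t : ℕ) (x : ℕ → Pt r) (hx0 : x 0 = 0) (hxt : x t = p)
    (hstep : ∀ k < t, ∃ i : Fin r, x (k+1) = x k + E i) :
    w p = -(((Finset.range t).filter (fun k =>
        w (x (k+1)) = w (x k) - 1 ∧ w (p - x k) = w (p - x (k+1)) - 1)).card : ℤ) ∧
    w p ≤ 0 := by
  have hterm : ∀ k ∈ range t,
      (w (x (k+1)) - w (x k)) + (w (p - x k) - w (p - x (k+1))) =
        if w (x (k+1)) = w (x k) - 1 ∧ w (p - x k) = w (p - x (k+1)) - 1 then -2 else 0 := by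
    intro k hk
    obtain ⟨i, hi⟩ := hstep k (mem_range.mp hk)
    have hx_nonneg : 0 ≤ x k := hx0 ▸ path_le_of_le hstep k.zero_le (mem_range.mp hk).le
    have hx_le : x k + E i ≤ p := hi ▸ hxt ▸ path_le_of_le hstep (mem_range.mp hk) le_rfl
    rw [hi]
    exact hw.step_add_dual_step hp hx_nonneg hx_le
  have htelescope :
      ∑ k ∈ range t, ((w (x (k+1)) - w (x k)) + (w (p - x k) - w (p - x (k+1)))) = 2 * w p := by
    rw [sum_add_distrib, sum_range_sub (fun k => w (x k)), sum_range_sub' (fun k => w (p - x k))]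
    simp only [hx0, hxt, sub_zero, sub_self, hw.1]
    ring
  rw [sum_congr rfl hterm, sum_ite, sum_const, sum_const_zero, nsmul_eq_mul] at htelescope
  omega
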